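/- Under the boundary-case, variance, and integrability assumptions, the triple (n^{1/2} W_n, Z_n, M_n − (3/2)·log n) converges jointly in law as n → ∞ to (√(2/(π σ²)) Z_∞, Z_∞, W), where P(W ≥ x | Z_∞) = exp(−c_* Z_∞ e^x) and c_* is the constant from Aïdékon's convergence in law of M_n − (3/2)·log n. (This follows from the joint convergence of (Z_n, M_n − (3/2)·log n), the convergence in probability n^{1/2} W_n → √(2/(π σ²)) Z_∞, and Slutsky's lemma.) -/

import Mathlib

open MeasureTheory ProbabilityTheory Filter Topology
open scoped ENNReal NNReal

/-!
A branching random walk on `ℝ`, encoded on Ulam–Harris labels (`List ℕ`):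
`T ω` is the genealogical tree, `V ω u` the position of individual `u`,
`u.length` its generation. The structure bundles the boundary case
assumptions, the variance assumption, the integrability assumption, the
non-lattice assumption, and the branching property (conditionally on the
σ-algebra `F n` of the first `n` generations, the processes generated
by the individuals of generation `n`, shifted to their birth positions,
are i.i.d. copies of the whole branching random walk).
-/
structure BRW where
  /-- the underlying sample space -/
  (Ω : Type)
  [m0 : MeasurableSpace Ω]
  (μ : Measure Ω)
  isProb : IsProbabilityMeasure μ
  /-- the genealogical tree, as a random set of Ulam–Harris labels -/
  T : Ω → Set (List ℕ)
  /-- the positions of the individuals -/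
  V : Ω → List ℕ → ℝ
  root_mem : ∀ ω, [] ∈ T ω
  root_pos : ∀ ω, V ω ([]) = 0
  tree_prefix_closed : ∀ ω, ∀ u v : List ℕ, u <+: v → v ∈ T ω → u ∈ T ω
  meas_T : ∀ u : List ℕ, MeasurableSet {ω | u ∈ T ω}
  meas_V : ∀ u : List ℕ, Measurable fun ω => V ω u
  /-- the natural filtration `F n = σ(u, V(u), |u| ≤ n)` -/
  F : MeasureTheory.Filtration ℕ m0
  F_meas_T : ∀ (n : ℕ) (u : List ℕ), u.length ≤ n → MeasurableSet[F n] {ω | u ∈ T ω}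
  F_meas_V : ∀ (n : ℕ) (u : List ℕ), u.length ≤ n → Measurable[F n] fun ω => V ω u
  /-- supercriticality: `E[∑_{|u|=1} 1] > 1` -/
  supercritical :
    1 < ∫⁻ ω, (∑' i : ℕ, Set.indicator {ω' | [i] ∈ T ω'} (fun _ => (1 : ℝ≥0∞)) ω) ∂μ
  /-- boundary case: `E[∑_{|u|=1} e^{-V(u)}] = 1` -/
  mean_one :
    ∫⁻ ω, (∑' i : ℕ, Set.indicator {ω' | [i] ∈ T ω'}
      (fun ω' => ENNReal.ofReal (Real.exp (-(V ω' ([i]))))) ω) ∂μ = 1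
  int_VexpV : Integrable (fun ω => ∑' i : ℕ, Set.indicator {ω' | [i] ∈ T ω'}
      (fun ω' => V ω' ([i]) * Real.exp (-(V ω' ([i])))) ω) μ
  /-- boundary case: `E[∑_{|u|=1} V(u) e^{-V(u)}] = 0` -/
  mean_zero :
    ∫ ω, (∑' i : ℕ, Set.indicator {ω' | [i] ∈ T ω'}
      (fun ω' => V ω' ([i]) * Real.exp (-(V ω' ([i])))) ω) ∂μ = 0
  /-- `σ² = E[∑_{|u|=1} V(u)² e^{-V(u)}]`, finite by the equality with `ENNReal.ofReal` -/
  σ2 : ℝ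
  variance_eq :
    ENNReal.ofReal σ2 = ∫⁻ ω, (∑' i : ℕ, Set.indicator {ω' | [i] ∈ T ω'}
      (fun ω' => ENNReal.ofReal ((V ω' ([i])) ^ 2 * Real.exp (-(V ω' ([i]))))) ω) ∂μ
  variance_pos : 0 < σ2
  /-- `E[∑_{|u|=1} e^{-V(u)} (log₊ ∑_{|u|=1} (1+V(u)₊) e^{-V(u)})²] < ∞` -/
  integrability :
    ∫⁻ ω, ENNReal.ofReal
      ((∑' i : ℕ, Set.indicator {ω' | [i] ∈ T ω'}
          (fun ω' => Real.exp (-(V ω' ([i])))) ω) *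
        (max (Real.log (∑' i : ℕ, Set.indicator {ω' | [i] ∈ T ω'}
          (fun ω' => (1 + max (V ω' ([i])) 0) * Real.exp (-(V ω' ([i])))) ω)) 0) ^ 2) ∂μ < ⊤
  /-- the displacement law is non-lattice -/
  nonlattice : ∀ a d : ℝ, 0 < d →
    ¬ (∀ᵐ ω ∂μ, ∀ i : ℕ, [i] ∈ T ω → ∃ k : ℤ, V ω ([i]) = a + k * d)
  /-- branching property: given `F n`, the shifted subtrees rooted at the individuals of
  generation `n` are i.i.d. copies of the whole branching random walk. A subtree rooted at `u`
  is encoded by the pair (membership predicate of the shifted tree, shifted positions). -/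
  branching : ∀ (n : ℕ) (us : Finset (List ℕ)), (∀ u ∈ us, u.length = n) →
    ∀ A : Set Ω, MeasurableSet[F n] A → (∀ ω ∈ A, ∀ u ∈ us, u ∈ T ω) →
    ∀ g : List ℕ → Set ((List ℕ → Prop) × (List ℕ → ℝ)),
      (∀ u ∈ us, MeasurableSet (g u)) →
      μ (A ∩ ⋂ u ∈ us, {ω | ((fun v => u ++ v ∈ T ω), fun v => V ω (u ++ v) - V ω u) ∈ g u})
        = μ A * ∏ u ∈ us, μ {ω | ((fun v => v ∈ T ω), V ω) ∈ g u}

attribute [instance] BRW.m0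

namespace BRW

variable (B : BRW)

/-- `M n`, the minimal position at generation `n`. -/
noncomputable def M (n : ℕ) (ω : B.Ω) : ℝ :=
  sInf {x | ∃ u ∈ B.T ω, u.length = n ∧ B.V ω u = x}

/-- `R n`, the minimal position attained after time `n`. -/
noncomputable def R (n : ℕ) (ω : B.Ω) : ℝ :=
  sInf {x | ∃ u ∈ B.T ω, n ≤ u.length ∧ B.V ω u = x}

/-- the additive martingale `W n = ∑_{|u|=n} e^{-V(u)}`. -/
noncomputable def W (n : ℕ) (ω : B.Ω) : ℝ :=
  ∑' u : List ℕ, Set.indicator {u : List ℕ | u.length = n ∧ u ∈ B.T ω}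
    (fun u => Real.exp (-(B.V ω u))) u

/-- the derivative martingale `Z n = ∑_{|u|=n} V(u) e^{-V(u)}`. -/
noncomputable def Z (n : ℕ) (ω : B.Ω) : ℝ :=
  ∑' u : List ℕ, Set.indicator {u : List ℕ | u.length = n ∧ u ∈ B.T ω}
    (fun u => B.V ω u * Real.exp (-(B.V ω u))) u

/-- `Zinf` is the a.s. limit `Z_∞` of the derivative martingale. -/
def IsDerivativeMartingaleLimit (Zinf : B.Ω → ℝ) : Prop :=
  Measurable Zinf ∧ ∀ᵐ ω ∂B.μ, Tendsto (fun n => B.Z n ω) atTop (𝓝 (Zinf ω))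

/-- `c_M` is the constant from Madaule's tail estimate `lim_{x→∞} e^x P(R_0 ≤ -x) = c_M`. -/
def IsMadauleConstant (cM : ℝ) : Prop :=
  0 < cM ∧
    Tendsto (fun x : ℝ => Real.exp x * (B.μ {ω | B.R 0 ω ≤ -x}).toReal) atTop (𝓝 cM)

end BRW

/-- convergence in law (in distribution) of `E`-valued random variables, stated by testing
against bounded continuous functions. -/
def ConvInLaw {Ω Ω' E : Type*} [MeasurableSpace Ω] [MeasurableSpace Ω'] [TopologicalSpace E]
    (μ : Measure Ω) (μ' : Measure Ω') (X : ℕ → Ω → E) (Y : Ω' → E) : Prop :=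
  ∀ f : BoundedContinuousFunction E ℝ,
    Tendsto (fun n => ∫ ω, f (X n ω) ∂μ) atTop (𝓝 (∫ ω, f (Y ω) ∂μ'))

/-- `c_*` is the constant from Aïdékon's theorem: `(Z_n, M_n - (3/2) log n)` converges in law
to a pair `(Z', W')` where `Z'` has the law of `Z_∞` and
`P(W' ≥ x | Z') = exp (-c_* Z' e^x)`. -/
def BRW.IsAidekonConstant (B : BRW) (Zinf : B.Ω → ℝ) (cstar : ℝ) : Prop :=
  ∃ (Ω' : Type) (m' : MeasurableSpace Ω') (μ' : @Measure Ω' m') (Z' W' : Ω' → ℝ),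
    @IsProbabilityMeasure Ω' m' μ' ∧ @Measurable Ω' ℝ m' _ Z' ∧ @Measurable Ω' ℝ m' _ W' ∧
    @Measure.map Ω' ℝ m' _ Z' μ' = Measure.map Zinf B.μ ∧
    (∀ x : ℝ,
      (MeasureTheory.condExp (m₀ := m') (MeasurableSpace.comap Z' Real.measurableSpace) μ'
          (Set.indicator {ω' | x ≤ W' ω'} (fun _ => (1 : ℝ))))
        =ᵐ[μ'] fun ω' => Real.exp (-(cstar * Z' ω' * Real.exp x))) ∧
    @ConvInLaw B.Ω Ω' (ℝ × ℝ) _ m' _ B.μ μ'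
      (fun n ω => (B.Z n ω, B.M n ω - (3 / 2) * Real.log n)) (fun ω' => (Z' ω', W' ω'))

/-- a random vector `(Z', W', L')` on some probability space, used to describe limits in law. -/
structure RandomTriple where
  (Ω' : Type)
  [m' : MeasurableSpace Ω']
  (μ' : Measure Ω')
  isProb : IsProbabilityMeasure μ'
  (Z' : Ω' → ℝ)
  (W' : Ω' → ℝ)
  (L' : Ω' → ℝ)
  meas_Z : Measurable Z'
  meas_W : Measurable W'
  meas_L : Measurable L'

attribute [instance] RandomTriple.m'

/-- a real random variable on some probability space, used to describe limits in law. -/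
structure RandomVar where
  (Ω' : Type)
  [m' : MeasurableSpace Ω']
  (μ' : Measure Ω')
  isProb : IsProbabilityMeasure μ'
  (X' : Ω' → ℝ)
  meas_X : Measurable X'

attribute [instance] RandomVar.m'

/-! Slutsky's lemma: replacing the first coordinate `c Z_n` of `(c Z_n, Z_n, M_n - (3/2) log n)`,
which converges in law by Aïdékon's theorem and the continuous mapping theorem, by
`n^{1/2} W_n` changes the triple by a term that tends to `0` in probability, because both
`n^{1/2} W_n` and `c Z_n` tend to `c Z_∞` in probability. -/

/-- The junk values agree: `EReal.toReal` sends `⊤` (empty `s`) and `⊥` (`s` unbounded below)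
to `0 = sInf s`. -/
theorem Real.sInf_eq_toReal_iInf_coe (s : Set ℝ) : sInf s = (⨅ x ∈ s, (x : EReal)).toReal := by
  rcases s.eq_empty_or_nonempty with rfl | hne
  · simp
  by_cases hbdd : BddBelow s
  · have : (⨅ x ∈ s, (x : EReal)) = (sInf s : ℝ) := by
      refine le_antisymm (le_of_forall_gt fun y hy => ?_) (le_iInf₂ fun x hx => ?_)
      · obtain ⟨r, hr, hry⟩ := EReal.lt_iff_exists_real_btwn.1 hy
        obtain ⟨x, hx, hxr⟩ := exists_lt_of_csInf_lt hne (EReal.coe_lt_coe_iff.1 hr)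
        exact (iInf₂_le x hx).trans_lt ((EReal.coe_lt_coe_iff.2 hxr).trans hry)
      · exact EReal.coe_le_coe_iff.2 (csInf_le hbdd hx)
    rw [this, EReal.toReal_coe]
  · have : (⨅ x ∈ s, (x : EReal)) = ⊥ := by
      refine (EReal.eq_bot_iff_forall_lt _).2 fun y => ?_
      obtain ⟨x, hx, hxy⟩ := not_bddBelow_iff.1 hbdd y
      exact (iInf₂_le x hx).trans_lt (EReal.coe_lt_coe_iff.2 hxy)
    rw [Real.sInf_of_not_bddBelow hbdd, this, EReal.toReal_bot]

theorem MeasureTheory.TendstoInMeasure.sub {α ι E : Type*} [MeasurableSpace α] {μ : Measure α}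
    [SeminormedAddCommGroup E] {l : Filter ι} {f f' : ι → α → E} {g g' : α → E}
    (hf : TendstoInMeasure μ f l g) (hf' : TendstoInMeasure μ f' l g') :
    TendstoInMeasure μ (f - f') l (g - g') := by
  rw [tendstoInMeasure_iff_dist] at *
  intro ε hε
  have hsum := (hf (ε / 2) (half_pos hε)).add (hf' (ε / 2) (half_pos hε))
  rw [add_zero] at hsum
  refine tendsto_of_tendsto_of_tendsto_of_le_of_le tendsto_const_nhds hsum (fun _ => zero_le)
    fun i => (measure_mono fun x hx => ?_).trans (measure_union_le _ _)
  by_contra hx'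
  simp only [Set.mem_union, Set.mem_ofPred_eq, Pi.sub_apply, not_or, not_le] at hx hx'
  linarith [dist_sub_sub_le (f i x) (f' i x) (g x) (g' x)]

theorem MeasureTheory.TendstoInMeasure.isometry_comp {α ι E F : Type*} [MeasurableSpace α]
    {μ : Measure α} [PseudoEMetricSpace E] [PseudoEMetricSpace F] {l : Filter ι}
    {f : ι → α → E} {g : α → E} {φ : E → F} (hφ : Isometry φ) (hf : TendstoInMeasure μ f l g) :
    TendstoInMeasure μ (fun i x => φ (f i x)) l (fun x => φ (g x)) := by
  simpa only [TendstoInMeasure, hφ.edist_eq] using hf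

theorem convInLaw_iff_tendstoInDistribution {Ω Ω' E : Type*} [MeasurableSpace Ω]
    [MeasurableSpace Ω'] [TopologicalSpace E] [MeasurableSpace E] [OpensMeasurableSpace E]
    {μ : Measure Ω} {μ' : Measure Ω'} [IsProbabilityMeasure μ] [IsProbabilityMeasure μ']
    {X : ℕ → Ω → E} {Y : Ω' → E} (hX : ∀ n, AEMeasurable (X n) μ) (hY : AEMeasurable Y μ') :
    ConvInLaw μ μ' X Y ↔ TendstoInDistribution X atTop Y (fun _ => μ) μ' := by
  refine ⟨fun h => ⟨hX, hY, ?_⟩, fun h f => ?_⟩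
  · refine ProbabilityMeasure.tendsto_iff_forall_integral_tendsto.2 fun f => ?_
    simpa only [ProbabilityMeasure.coe_mk, integral_map (hX _) f.continuous.aestronglyMeasurable,
      integral_map hY f.continuous.aestronglyMeasurable] using h f
  · have := ProbabilityMeasure.tendsto_iff_forall_integral_tendsto.1 h.tendsto f
    simpa only [ProbabilityMeasure.coe_mk, integral_map (hX _) f.continuous.aestronglyMeasurable,
      integral_map hY f.continuous.aestronglyMeasurable] using this

namespace BRW
variable (B : BRW)

theorem measurableSet_generation (n : ℕ) (u : List ℕ) :
    MeasurableSet {ω | u.length = n ∧ u ∈ B.T ω} :=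
  (MeasurableSet.const _).inter (B.meas_T u)

open Classical in
theorem M_eq_toReal_iInf (n : ℕ) (ω : B.Ω) :
    B.M n ω = (⨅ u, if u.length = n ∧ u ∈ B.T ω then (B.V ω u : EReal) else ⊤).toReal := by
  have hS : {x | ∃ u ∈ B.T ω, u.length = n ∧ B.V ω u = x}
      = B.V ω '' {u | u.length = n ∧ u ∈ B.T ω} := by
    ext x; simp only [Set.mem_image]; grind
  rw [M, Real.sInf_eq_toReal_iInf_coe, hS, iInf_image]
  simp only [← iInf_eq_if, Set.mem_ofPred_eq, iInf_and]

theorem measurable_generation_indicator (n : ℕ) (u : List ℕ) {g : B.Ω → List ℕ → ℝ}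
    (hg : Measurable fun ω => g ω u) :
    Measurable fun ω => {v | v.length = n ∧ v ∈ B.T ω}.indicator (g ω) u := by
  classical
  simp only [Set.indicator_apply, Set.mem_ofPred_eq]
  exact Measurable.ite (B.measurableSet_generation n u) hg measurable_const

theorem measurable_W (n : ℕ) : Measurable (B.W n) :=
  Measurable.tsum fun u => B.measurable_generation_indicator n u (B.meas_V u).neg.exp

theorem measurable_Z (n : ℕ) : Measurable (B.Z n) :=
  Measurable.tsum fun u =>
    B.measurable_generation_indicator n u ((B.meas_V u).mul (B.meas_V u).neg.exp)

theorem measurable_M (n : ℕ) : Measurable (B.M n) := by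
  classical
  simp only [funext (B.M_eq_toReal_iInf n)]
  exact (Measurable.iInf fun u => Measurable.ite (B.measurableSet_generation n u)
    (B.meas_V u).coe_real_ereal measurable_const).ereal_toReal

end BRW

theorem joint_convergence_general (B : BRW) (Zinf : B.Ω → ℝ)
    (hZinf : B.IsDerivativeMartingaleLimit Zinf)
    (Ω' : Type) [MeasurableSpace Ω'] (μ' : Measure Ω') (hprob : IsProbabilityMeasure μ')
    (Z' W' : Ω' → ℝ) (hZ'meas : Measurable Z') (hW'meas : Measurable W')
    (hAid : ConvInLaw B.μ μ'
      (fun n ω => (B.Z n ω, B.M n ω - (3 / 2) * Real.log n)) (fun ω' => (Z' ω', W' ω')))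
    (hAiS : TendstoInMeasure B.μ (fun (n : ℕ) ω => Real.sqrt n * B.W n ω) atTop
      (fun ω => Real.sqrt (2 / (Real.pi * B.σ2)) * Zinf ω)) :
    ConvInLaw B.μ μ'
      (fun (n : ℕ) ω => (Real.sqrt n * B.W n ω, B.Z n ω, B.M n ω - (3 / 2) * Real.log n))
      (fun ω' => (Real.sqrt (2 / (Real.pi * B.σ2)) * Z' ω', Z' ω', W' ω')) := by
  have := B.isProb
  set c := Real.sqrt (2 / (Real.pi * B.σ2))
  have hZM (n : ℕ) : Measurable fun ω => (B.Z n ω, B.M n ω - (3 / 2) * Real.log n) :=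
    (B.measurable_Z n).prodMk ((B.measurable_M n).sub_const _)
  have hlimit : TendstoInDistribution
      (fun n ω => (c * B.Z n ω, B.Z n ω, B.M n ω - (3 / 2) * Real.log n)) atTop
      (fun ω' => (c * Z' ω', Z' ω', W' ω')) (fun _ => B.μ) μ' :=
    ((convInLaw_iff_tendstoInDistribution (fun n => (hZM n).aemeasurable)
      (hZ'meas.prodMk hW'meas).aemeasurable).1 hAid).continuous_comp
      (g := fun p : ℝ × ℝ => (c * p.1, p.1, p.2)) (by fun_prop)
  have hcZ : TendstoInMeasure B.μ (fun n ω => c * B.Z n ω) atTop (fun ω => c * Zinf ω) :=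
    tendstoInMeasure_of_tendsto_ae (fun n => ((B.measurable_Z n).const_mul c).aestronglyMeasurable)
      (hZinf.2.mono fun ω h => h.const_mul c)
  have hgap :
      TendstoInMeasure B.μ (fun (n : ℕ) ω => Real.sqrt n * B.W n ω - c * B.Z n ω) atTop 0 := by
    have := hAiS.sub hcZ
    rwa [sub_self] at this
  have hmeas (n : ℕ) : Measurable fun ω =>
      (Real.sqrt n * B.W n ω, B.Z n ω, B.M n ω - (3 / 2) * Real.log n) :=
    ((B.measurable_W n).const_mul _).prodMk (hZM n)
  refine (convInLaw_iff_tendstoInDistribution (fun n => (hmeas n).aemeasurable)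
    (by fun_prop)).2 (tendstoInDistribution_of_tendstoInMeasure_sub _ _ hlimit ?_
      fun n => (hmeas n).aemeasurable)
  -- the two triples differ only in their first coordinate
  convert hgap.isometry_comp (φ := fun x : ℝ => (x, (0 : ℝ × ℝ)))
    (Isometry.of_dist_eq fun x y => by simp [Prod.dist_eq]) using 1 <;> ext <;> simp

/-- joint convergence in law of `(n^{1/2} W_n, Z_n, M_n - (3/2) log n)` to
`(√(2/(π σ²)) Z_∞, Z_∞, W)`, obtained from Aïdékon's theorem, the convergence in
probability `n^{1/2} W_n → √(2/(π σ²)) Z_∞` of Aïdékon–Shi, and Slutsky's lemma. -/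
theorem joint_convergence (B : BRW) (Zinf : B.Ω → ℝ)
    (hZinf : B.IsDerivativeMartingaleLimit Zinf) (cstar : ℝ)
    (Ω' : Type) [MeasurableSpace Ω'] (μ' : Measure Ω') (hprob : IsProbabilityMeasure μ')
    (Z' W' : Ω' → ℝ) (hZ'meas : Measurable Z') (hW'meas : Measurable W')
    (hlaw : Measure.map Z' μ' = Measure.map Zinf B.μ)
    (hcond : ∀ x : ℝ,
      MeasureTheory.condExp (MeasurableSpace.comap Z' Real.measurableSpace) μ'
          (Set.indicator {ω' | x ≤ W' ω'} fun _ => (1 : ℝ))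
        =ᵐ[μ'] fun ω' => Real.exp (-(cstar * Z' ω' * Real.exp x)))
    (hAid : ConvInLaw B.μ μ'
      (fun n ω => (B.Z n ω, B.M n ω - (3 / 2) * Real.log n)) (fun ω' => (Z' ω', W' ω')))
    (hAiS : TendstoInMeasure B.μ (fun (n : ℕ) ω => Real.sqrt n * B.W n ω) atTop
      (fun ω => Real.sqrt (2 / (Real.pi * B.σ2)) * Zinf ω)) :
    ConvInLaw B.μ μ'
      (fun (n : ℕ) ω => (Real.sqrt n * B.W n ω, B.Z n ω, B.M n ω - (3 / 2) * Real.log n))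
      (fun ω' => (Real.sqrt (2 / (Real.pi * B.σ2)) * Z' ω', Z' ω', W' ω')) :=
  joint_convergence_general B Zinf hZinf Ω' μ' hprob Z' W' hZ'meas hW'meas hAid hAiS
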